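/- For cd-monomials u and v of degrees m and n respectively, β(u • v) = C(m+n+2, m+1) · β(u) · β(v), where • denotes the product on F̂ dual to the coproduct Δ̂ under the monomial basis identification. -/

import Mathlib

open scoped TensorProduct

/-- cd-monomials: `false` is the letter `c`, `true` is the letter `d`. -/
abbrev Mon := List Bool

/-- The polynomial algebra `F = ℚ⟨c,d⟩`. -/
abbrev F := MonoidAlgebra ℚ (FreeMonoid Bool)

noncomputable def mono (w : Mon) : F := MonoidAlgebra.single (FreeMonoid.ofList w) 1

noncomputable def cF : F := mono [false]
noncomputable def dF : F := mono [true]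

noncomputable def gLetter : Bool → F
  | false => dF
  | true  => cF * dF

noncomputable def gMon : Mon → F
  | [] => 0
  | a :: t => gLetter a * mono t + mono [a] * gMon t

/-- The derivation `G` with `G c = d`, `G d = cd`. -/
noncomputable def G : F →ₗ[ℚ] F :=
  (Finsupp.lsum ℚ fun w => LinearMap.toSpanSingleton ℚ F (gMon (FreeMonoid.toList w))).comp
    (MonoidAlgebra.coeffLinearEquiv ℚ : F ≃ₗ[ℚ] FreeMonoid Bool →₀ ℚ).toLinearMap

/-- `Psi n` is the cd-index of the Boolean lattice of rank `n+1`. -/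
noncomputable def Psi : ℕ → F
  | 0 => 1
  | n+1 => Psi n * cF + G (Psi n)

/-- degree of a cd-monomial (`c` has degree 1, `d` degree 2). -/
def deg (w : Mon) : ℕ := w.length + w.count true

/-- `beta v` : coefficient of `v` in the cd-index of the Boolean lattice of rank `deg v + 1`. -/
noncomputable def beta (w : Mon) : ℚ := (Psi (deg w)).coeff (FreeMonoid.ofList w)

/-- `Δ` applied to a letter, as a finitely supported function on pairs of monomials:
`Δ(c) = 2 (1⊗1)`, `Δ(d) = 1⊗c + c⊗1`. -/
noncomputable def dL : Bool → (Mon × Mon) →₀ ℚ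
  | false => Finsupp.single ([], []) 2
  | true  => Finsupp.single ([], [false]) 1 + Finsupp.single ([false], []) 1

/-- `Δ` on monomials (coefficients on pairs of monomials), via the derivation rule
`Δ(uv) = Δ(u)v + uΔ(v)`, the bimodule structure being `x(u⊗v)y = xu⊗vy`. -/
noncomputable def dP : Mon → (Mon × Mon) →₀ ℚ
  | [] => 0
  | a :: t =>
      Finsupp.mapDomain (fun p => (p.1, p.2 ++ t)) (dL a)
        + Finsupp.mapDomain (fun p => (a :: p.1, p.2)) (dP t)

/-- All boolean lists of length at most `n` (a set supporting every cd-monomial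
that can occur in `u • v`). -/
def allLists : ℕ → List Mon
  | 0 => [[]]
  | n+1 => [] :: (allLists n).flatMap fun w => [false :: w, true :: w]

/-- The product `•` on `F`, dual to the coproduct `Δ̂` under the monomial basis
identification: the coefficient of a monomial `w` in `u • v` is the coefficient
of `u ⊗ v` in `Δ̂(w)`. -/
noncomputable def bulletDualMon (u v : Mon) : F :=
  ((allLists (u.length + v.length + 1)).map fun w => (dP w) (u, v) • mono w).sum

/-- `β` extended linearly to `F`. -/
noncomputable def betaF : F →ₗ[ℚ] ℚ :=
  (Finsupp.lsum ℚ fun w => LinearMap.toSpanSingleton ℚ ℚ (beta (FreeMonoid.toList w))).comp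
    (MonoidAlgebra.coeffLinearEquiv ℚ : F ≃ₗ[ℚ] FreeMonoid Bool →₀ ℚ).toLinearMap

-- ====== auxiliary development ======


lemma mono_mul (a b : Mon) : mono a * mono b = mono (a ++ b) := by
  simp [mono, MonoidAlgebra.single_mul_single]

lemma mono_nil : mono [] = 1 := rfl

noncomputable def S : ((Mon × Mon) →₀ ℚ) →ₗ[ℚ] F ⊗[ℚ] F :=
  Finsupp.lsum ℚ fun p => LinearMap.toSpanSingleton ℚ _ (mono p.1 ⊗ₜ[ℚ] mono p.2)

noncomputable def Delta : F →ₗ[ℚ] F ⊗[ℚ] F :=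
  (Finsupp.lsum ℚ fun w => LinearMap.toSpanSingleton ℚ _ (S (dP (FreeMonoid.toList w)))).comp
    (MonoidAlgebra.coeffLinearEquiv ℚ : F ≃ₗ[ℚ] FreeMonoid Bool →₀ ℚ).toLinearMap

lemma S_single (p : Mon × Mon) (r : ℚ) :
    S (Finsupp.single p r) = r • (mono p.1 ⊗ₜ[ℚ] mono p.2) := by
  simp [S]

lemma Delta_mono (w : Mon) : Delta (mono w) = S (dP w) := by
  rw [Delta, LinearMap.comp_apply, mono, MonoidAlgebra.single]
  erw [Finsupp.lsum_single]
  simp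

lemma G_mono (w : Mon) : G (mono w) = gMon w := by
  rw [G, LinearMap.comp_apply, mono, MonoidAlgebra.single]
  erw [Finsupp.lsum_single]
  simp

lemma betaF_mono (w : Mon) : betaF (mono w) = beta w := by
  rw [betaF, LinearMap.comp_apply, mono, MonoidAlgebra.single]
  erw [Finsupp.lsum_single]
  simp

lemma S_mapDomain_right (t : Mon) (μ : (Mon × Mon) →₀ ℚ) :
    S (Finsupp.mapDomain (fun p => (p.1, p.2 ++ t)) μ) = S μ * (1 ⊗ₜ[ℚ] mono t) := by
  induction μ using Finsupp.induction_linear with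
  | zero => simp
  | add f g hf hg => rw [Finsupp.mapDomain_add, map_add, map_add, hf, hg, add_mul]
  | single p r =>
      rw [Finsupp.mapDomain_single, S_single, S_single, smul_mul_assoc,
        Algebra.TensorProduct.tmul_mul_tmul, mul_one, mono_mul]

lemma S_mapDomain_left (a : Bool) (μ : (Mon × Mon) →₀ ℚ) :
    S (Finsupp.mapDomain (fun p => (a :: p.1, p.2)) μ) = (mono [a] ⊗ₜ[ℚ] 1) * S μ := by
  induction μ using Finsupp.induction_linear with
  | zero => simp
  | add f g hf hg => rw [Finsupp.mapDomain_add, map_add, map_add, hf, hg, mul_add]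
  | single p r =>
      rw [Finsupp.mapDomain_single, S_single, S_single, mul_smul_comm,
        Algebra.TensorProduct.tmul_mul_tmul, one_mul, mono_mul]
      rfl

lemma S_dP_append (w : Mon) : ∀ s, S (dP (w ++ s)) =
    S (dP w) * (1 ⊗ₜ[ℚ] mono s) + (mono w ⊗ₜ[ℚ] 1) * S (dP s) := by
  induction w with
  | nil =>
      intro s
      simp [dP, mono_nil, ← Algebra.TensorProduct.one_def]
  | cons a t ih =>
      intro s
      have hcomp : (fun p : Mon × Mon => (p.1, p.2 ++ (t ++ s)))
          = (fun p : Mon × Mon => (p.1, p.2 ++ s)) ∘ (fun p : Mon × Mon => (p.1, p.2 ++ t)) := by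
        funext p; simp
      show S (dP (a :: (t ++ s))) = _
      rw [dP, map_add, hcomp, Finsupp.mapDomain_comp, S_mapDomain_right, S_mapDomain_right,
        S_mapDomain_left, ih, dP, map_add, S_mapDomain_right, S_mapDomain_left]
      have : (mono (a :: t) ⊗ₜ[ℚ] (1:F)) = (mono [a] ⊗ₜ[ℚ] (1:F)) * (mono t ⊗ₜ[ℚ] (1:F)) := by
        rw [Algebra.TensorProduct.tmul_mul_tmul, one_mul, mono_mul]
        rfl
      rw [this]
      noncomm_ring

lemma single_eq_smul_mono (v : FreeMonoid Bool) (r : ℚ) :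
    (MonoidAlgebra.single v r : F) = r • mono (FreeMonoid.toList v) := by
  rw [mono]
  simp [MonoidAlgebra.smul_single']

lemma Delta_mono_mul (w : Mon) (y : F) :
    Delta (mono w * y) = Delta (mono w) * (1 ⊗ₜ[ℚ] y) + (mono w ⊗ₜ[ℚ] 1) * Delta y := by
  induction y using MonoidAlgebra.induction_linear with
  | zero => simp
  | add f g hf hg =>
      rw [mul_add, map_add, map_add, TensorProduct.tmul_add, mul_add, mul_add, hf, hg]
      abel
  | single v r =>
      rw [single_eq_smul_mono, mul_smul_comm, map_smul, map_smul, TensorProduct.tmul_smul,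
        mul_smul_comm, mul_smul_comm, ← smul_add, mono_mul, Delta_mono, Delta_mono, Delta_mono,
        S_dP_append]

lemma Delta_mul (x y : F) :
    Delta (x * y) = Delta x * (1 ⊗ₜ[ℚ] y) + (x ⊗ₜ[ℚ] 1) * Delta y := by
  induction x using MonoidAlgebra.induction_linear with
  | zero => simp
  | add f g hf hg =>
      rw [add_mul, map_add, map_add, TensorProduct.add_tmul, add_mul, add_mul, hf, hg]
      abel
  | single w r =>
      rw [single_eq_smul_mono, smul_mul_assoc, map_smul, map_smul, smul_mul_assoc,
        ← TensorProduct.smul_tmul', smul_mul_assoc, ← smul_add, Delta_mono_mul]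

noncomputable def Plin : F →ₗ[ℚ] F := (LinearMap.mulRight ℚ cF) + G

lemma Plin_apply (x : F) : Plin x = x * cF + G x := rfl

lemma Psi_succ (n : ℕ) : Psi (n+1) = Plin (Psi n) := rfl

lemma G_one : G (1:F) = 0 := by
  rw [← mono_nil, G_mono]; rfl

lemma mono_cons (a : Bool) (t : Mon) : mono (a :: t) = mono [a] * mono t := by
  rw [mono_mul]; rfl

lemma G_letter_mul (a : Bool) (x : F) :
    G (mono [a] * x) = gLetter a * x + mono [a] * G x := by
  induction x using MonoidAlgebra.induction_linear with
  | zero => simp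
  | add f g hf hg =>
      rw [mul_add, map_add, hf, hg, map_add]
      simp only [mul_add]
      abel
  | single v r =>
      rw [single_eq_smul_mono, mul_smul_comm, map_smul, map_smul, mul_smul_comm, mul_smul_comm,
        ← smul_add, mono_mul, G_mono, G_mono]
      rfl

lemma G_c : G cF = dF := by
  rw [cF, G_mono]; simp [gMon, gLetter, mono_nil]

lemma G_d : G dF = cF * dF := by
  rw [dF, G_mono]; simp [gMon, gLetter, mono_nil, dF]

noncomputable def Pext : F ⊗[ℚ] F →ₗ[ℚ] F ⊗[ℚ] F :=
  TensorProduct.map Plin LinearMap.id + TensorProduct.map LinearMap.id Plin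

lemma Pext_tmul (x y : F) : Pext (x ⊗ₜ[ℚ] y) = Plin x ⊗ₜ[ℚ] y + x ⊗ₜ[ℚ] Plin y := by
  simp [Pext]

lemma Plin_letter (a : Bool) (x : F) :
    Plin (mono [a] * x) = mono [a] * Plin x + gLetter a * x := by
  rw [Plin_apply, Plin_apply, G_letter_mul, mul_add, mul_assoc]
  abel

lemma Pext_letter_mul (a : Bool) (z : F ⊗[ℚ] F) :
    Pext ((mono [a] ⊗ₜ[ℚ] 1) * z)
      = (mono [a] ⊗ₜ[ℚ] 1) * Pext z + (gLetter a ⊗ₜ[ℚ] (1:F)) * z := by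
  induction z using TensorProduct.induction_on with
  | zero => simp
  | tmul x y =>
      rw [Algebra.TensorProduct.tmul_mul_tmul, one_mul, Pext_tmul, Pext_tmul, Plin_letter]
      simp only [Algebra.TensorProduct.tmul_mul_tmul, one_mul, TensorProduct.add_tmul, mul_add]
      abel
  | add z₁ z₂ h₁ h₂ =>
      rw [mul_add, map_add, map_add, h₁, h₂, mul_add, mul_add]
      abel

lemma dP_c : dP [false] = Finsupp.single ([], []) 2 := by
  rw [dP]
  simp [dP, dL, Finsupp.mapDomain_single]

lemma dP_d : dP [true] = Finsupp.single ([], [false]) 1 + Finsupp.single ([false], []) 1 := by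
  rw [dP]
  simp [dP, dL, Finsupp.mapDomain_single, Finsupp.mapDomain_add]

lemma Delta_c : Delta cF = (2:ℚ) • ((1:F) ⊗ₜ[ℚ] (1:F)) := by
  rw [cF, Delta_mono, dP_c, S_single]
  rfl

lemma Delta_d : Delta dF = (1:F) ⊗ₜ[ℚ] cF + cF ⊗ₜ[ℚ] (1:F) := by
  rw [dF, Delta_mono, dP_d, map_add, S_single, S_single]
  norm_num
  rfl

lemma G_cF_mul (x : F) : G (cF * x) = dF * x + cF * G x := G_letter_mul false x

set_option maxHeartbeats 1000000 in
lemma Delta_Plin_mono (w : Mon) :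
    Delta (Plin (mono w)) = Pext (Delta (mono w)) + 1 ⊗ₜ[ℚ] mono w + mono w ⊗ₜ[ℚ] 1 := by
  induction w with
  | nil =>
      have h1 : Delta (1:F) = 0 := by rw [← mono_nil, Delta_mono]; simp [dP]
      rw [mono_nil, Plin_apply, G_one, one_mul, add_zero, Delta_c, h1, map_zero, zero_add,
        two_smul ℚ]
  | cons a t ih =>
      rw [mono_cons, Plin_letter, map_add, Delta_mono_mul, Delta_mul, ih, Delta_mono_mul,
        map_add, Pext_letter_mul]
      cases a with
      | false =>
          simp only [show gLetter false = dF from rfl, show mono [false] = cF from rfl,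
            Delta_c, Delta_d, Plin_apply, G_one, G_c, G_cF_mul, map_add, map_smul,
            TensorProduct.zero_tmul, TensorProduct.tmul_zero, add_zero, zero_add,
            smul_mul_assoc, Algebra.TensorProduct.tmul_mul_tmul, one_mul, mul_one,
            Pext_tmul, TensorProduct.tmul_add, TensorProduct.add_tmul, TensorProduct.tmul_smul,
            ← TensorProduct.smul_tmul', mul_add, add_mul, smul_add, mul_assoc, two_smul ℚ]
          abel
      | true =>
          rw [show gLetter true = cF * dF from rfl, Delta_mul, Delta_c, Delta_d]
          simp only [show mono [true] = dF from rfl, Delta_d, Plin_apply, G_one, G_c, G_d,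
            G_cF_mul, map_add, map_smul,
            TensorProduct.zero_tmul, TensorProduct.tmul_zero, add_zero, zero_add,
            smul_mul_assoc, Algebra.TensorProduct.tmul_mul_tmul, one_mul, mul_one,
            Pext_tmul, TensorProduct.tmul_add, TensorProduct.add_tmul, TensorProduct.tmul_smul,
            ← TensorProduct.smul_tmul', mul_add, add_mul, smul_add, mul_assoc, two_smul ℚ]
          abel

lemma Delta_one : Delta (1:F) = 0 := by
  rw [← mono_nil, Delta_mono]; simp [dP]

lemma Delta_Plin (x : F) :
    Delta (Plin x) = Pext (Delta x) + 1 ⊗ₜ[ℚ] x + x ⊗ₜ[ℚ] 1 := by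
  induction x using MonoidAlgebra.induction_linear with
  | zero => simp
  | add f g hf hg =>
      rw [map_add, map_add, map_add, hf, hg, TensorProduct.tmul_add, TensorProduct.add_tmul,
        map_add]
      abel
  | single w r =>
      rw [single_eq_smul_mono, map_smul, map_smul, map_smul, map_smul, TensorProduct.tmul_smul,
        ← TensorProduct.smul_tmul', ← smul_add, ← smul_add, Delta_Plin_mono]

lemma Psi_zero : Psi 0 = 1 := rfl

lemma Delta_Psi (n : ℕ) :
    Delta (Psi n) = ∑ j ∈ Finset.range n,
      (((n+1).choose (j+1) : ℚ)) • (Psi j ⊗ₜ[ℚ] Psi (n-1-j)) := by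
  induction n with
  | zero => simp [Psi_zero, Delta_one]
  | succ n ih =>
      rw [Psi_succ, Delta_Plin, ih, map_sum]
      have key : ∀ j ∈ Finset.range n,
          (Pext ((((n+1).choose (j+1) : ℕ) : ℚ) • (Psi j ⊗ₜ[ℚ] Psi (n-1-j))))
            = (((n+1).choose (j+1) : ℕ) : ℚ) • (Psi (j+1) ⊗ₜ[ℚ] Psi (n-1-j))
              + (((n+1).choose (j+1) : ℕ) : ℚ) • (Psi j ⊗ₜ[ℚ] Psi (n-j)) := by
        intro j hj
        simp only [Finset.mem_range] at hj
        rw [map_smul, Pext_tmul, ← Psi_succ, ← Psi_succ, smul_add]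
        have : n - 1 - j + 1 = n - j := by omega
        rw [this]
      rw [Finset.sum_congr rfl key, Finset.sum_add_distrib]
      have h2 : ∀ j ∈ Finset.range (n+1),
          ((((n+1+1).choose (j+1) : ℕ) : ℚ)) • (Psi j ⊗ₜ[ℚ] Psi (n+1-1-j))
            = (((n+1).choose j : ℕ) : ℚ) • (Psi j ⊗ₜ[ℚ] Psi (n-j))
              + (((n+1).choose (j+1) : ℕ) : ℚ) • (Psi j ⊗ₜ[ℚ] Psi (n-j)) := by
        intro j hj
        have h3 : n + 1 - 1 - j = n - j := by omega
        rw [h3, ← add_smul, ← Nat.cast_add, ← Nat.choose_succ_succ (n+1) j]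
      rw [Finset.sum_congr rfl h2, Finset.sum_add_distrib, Finset.sum_range_succ' _ n,
        Finset.sum_range_succ]
      have h4 : ∀ j ∈ Finset.range n,
          (((n+1).choose (j+1) : ℕ) : ℚ) • (Psi (j+1) ⊗ₜ[ℚ] Psi (n-(j+1)))
            = (((n+1).choose (j+1) : ℕ) : ℚ) • (Psi (j+1) ⊗ₜ[ℚ] Psi (n-1-j)) := by
        intro j hj
        have : n - (j+1) = n - 1 - j := by omega
        rw [this]
      rw [Finset.sum_congr rfl h4]
      simp only [Nat.choose_zero_right, Nat.cast_one, one_smul, Nat.sub_zero, Nat.choose_self,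
        Nat.sub_self, Psi_zero]
      abel

instance : DecidableEq (FreeMonoid Bool) := inferInstanceAs (DecidableEq (List Bool))

noncomputable def E (u v : Mon) : F ⊗[ℚ] F →ₗ[ℚ] ℚ :=
  TensorProduct.lift (LinearMap.mk₂ ℚ
    (fun x y => x.coeff (FreeMonoid.ofList u) * y.coeff (FreeMonoid.ofList v))
    (by intro a b c
        have h : (a + b).coeff (FreeMonoid.ofList u) = a.coeff (FreeMonoid.ofList u) + b.coeff (FreeMonoid.ofList u) := rfl
        rw [h, add_mul])
    (by intro c a b
        have h : (c • a).coeff (FreeMonoid.ofList u) = c * a.coeff (FreeMonoid.ofList u) := rfl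
        rw [h, smul_eq_mul, mul_assoc])
    (by intro a b c
        have h : (b + c).coeff (FreeMonoid.ofList v) = b.coeff (FreeMonoid.ofList v) + c.coeff (FreeMonoid.ofList v) := rfl
        rw [h, mul_add])
    (by intro c a b
        have h : (c • b).coeff (FreeMonoid.ofList v) = c * b.coeff (FreeMonoid.ofList v) := rfl
        rw [h, smul_eq_mul]
        ring))

lemma E_tmul (u v : Mon) (x y : F) :
    E u v (x ⊗ₜ[ℚ] y) = x.coeff (FreeMonoid.ofList u) * y.coeff (FreeMonoid.ofList v) := rfl

lemma mono_apply (a b : Mon) : (mono a).coeff (FreeMonoid.ofList b) = if a = b then 1 else 0 := by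
  rw [mono, MonoidAlgebra.coeff_single, Finsupp.single_apply]
  congr 1

lemma E_S (u v : Mon) (μ : (Mon × Mon) →₀ ℚ) : E u v (S μ) = μ (u, v) := by
  induction μ using Finsupp.induction_linear with
  | zero => simp
  | add f g hf hg => rw [map_add, map_add, hf, hg]; simp
  | single p r =>
      rw [S_single, map_smul, E_tmul, mono_apply, mono_apply, smul_eq_mul,
        Finsupp.single_apply]
      rcases p with ⟨p1, p2⟩
      by_cases h1 : p1 = u <;> by_cases h2 : p2 = v <;>
        simp [h1, h2, Prod.ext_iff]

/-- homogeneity predicate -/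
def Homog (x : F) (n : ℕ) : Prop := ∀ w ∈ x.coeff.support, deg (FreeMonoid.toList w) = n

lemma deg_cons (a : Bool) (t : Mon) : deg (a :: t) = (if a then 2 else 1) + deg t := by
  cases a <;> simp [deg, List.count_cons] <;> omega

lemma homog_mono (w : Mon) : Homog (mono w) (deg w) := by
  intro w' hw'
  have := Finsupp.support_single_subset hw'
  simp only [Finset.mem_singleton] at this
  subst this
  rfl

lemma homog_add {x y : F} {n : ℕ} (hx : Homog x n) (hy : Homog y n) : Homog (x + y) n := by
  intro w hw
  rcases Finset.mem_union.1 (Finsupp.support_add hw) with h | h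
  · exact hx w h
  · exact hy w h

lemma homog_mul {x y : F} {n m : ℕ} (hx : Homog x n) (hy : Homog y m) :
    Homog (x * y) (n + m) := by
  intro w hw
  have := MonoidAlgebra.support_coeff_mul_subset x y hw
  rw [Finset.mem_mul] at this
  obtain ⟨a, ha, b, hb, hab⟩ := this
  subst hab
  have : deg (FreeMonoid.toList (a * b)) = deg (FreeMonoid.toList a) + deg (FreeMonoid.toList b) := by
    show deg (FreeMonoid.toList a ++ FreeMonoid.toList b) = _
    simp [deg, List.count_append]
    omega
  rw [this, hx a ha, hy b hb]

lemma homog_smul {x : F} {n : ℕ} (r : ℚ) (hx : Homog x n) : Homog (r • x) n := by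
  intro w hw
  exact hx w (Finsupp.support_smul hw)

lemma homog_c : Homog cF 1 := homog_mono [false]
lemma homog_d : Homog dF 2 := homog_mono [true]

lemma homog_gMon (t : Mon) : Homog (gMon t) (deg t + 1) := by
  induction t with
  | nil => intro w hw; simp [gMon] at hw
  | cons a t ih =>
      rw [gMon]
      apply homog_add
      · cases a
        · have h := homog_mul homog_d (homog_mono t)
          have h2 : (2 : ℕ) + deg t = deg (false :: t) + 1 := by
            simp [deg, List.count_cons]
            omega
          rw [h2] at h
          exact h
        · have h := homog_mul (homog_mul homog_c homog_d) (homog_mono t)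
          have h2 : ((1 : ℕ) + 2) + deg t = deg (true :: t) + 1 := by
            simp [deg, List.count_cons]
            omega
          rw [h2] at h
          exact h
      · have := homog_mul (homog_mono [a]) ih
        have hd : deg [a] + (deg t + 1) = deg (a :: t) + 1 := by
          cases a <;> simp [deg, List.count_cons] <;> omega
        rw [hd] at this
        exact this

lemma homog_G {x : F} {n : ℕ} (hx : Homog x n) : Homog (G x) (n + 1) := by
  rw [G, LinearMap.comp_apply]
  erw [Finsupp.lsum_apply]
  rw [Finsupp.sum]
  intro w hw
  rw [MonoidAlgebra.coeff_sum] at hw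
  have := Finsupp.support_finset_sum (s := x.coeff.support)
    (f := fun a => ((LinearMap.toSpanSingleton ℚ F (gMon (FreeMonoid.toList a))) (x.coeff a)).coeff) hw
  rw [Finset.mem_biUnion] at this
  obtain ⟨a, ha, hw'⟩ := this
  have h2 : deg (FreeMonoid.toList w) = deg (FreeMonoid.toList a) + 1 := by
    apply homog_gMon
    simp only [LinearMap.toSpanSingleton_apply, MonoidAlgebra.coeff_smul] at hw'
    exact Finsupp.support_smul hw'
  rw [h2, hx a ha]

lemma homog_Psi (n : ℕ) : Homog (Psi n) n := by
  induction n with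
  | zero => exact homog_mono []
  | succ n ih =>
      show Homog (Psi n * cF + G (Psi n)) (n+1)
      exact homog_add (homog_mul ih homog_c) (homog_G ih)

lemma dP_apply_ne {w : Mon} {p : Mon × Mon} (h : dP w p ≠ 0) :
    deg p.1 + deg p.2 + 1 = deg w ∧ w.length ≤ p.1.length + p.2.length + 1 := by
  induction w generalizing p with
  | nil => simp [dP] at h
  | cons a t ih =>
      rw [dP, Finsupp.add_apply] at h
      have h2 : Finsupp.mapDomain (fun p : Mon × Mon => (p.1, p.2 ++ t)) (dL a) p ≠ 0
          ∨ Finsupp.mapDomain (fun p : Mon × Mon => (a :: p.1, p.2)) (dP t) p ≠ 0 := by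
        by_contra hc
        push_neg at hc
        rw [hc.1, hc.2] at h
        simp at h
      rcases h2 with h2 | h2
      · have hmem := Finsupp.mapDomain_support (Finsupp.mem_support_iff.2 h2)
        rw [Finset.mem_image] at hmem
        obtain ⟨q, hq, hqp⟩ := hmem
        cases a with
        | false =>
            have : q = ([], []) := by
              simpa [dL] using hq
            subst this
            subst hqp
            constructor <;> simp [deg, List.count_cons] <;> omega
        | true =>
            have hq2 : q = ([], [false]) ∨ q = ([false], []) := by
              have h3 := Finsupp.support_add (by simpa [dL] using hq)
              rcases Finset.mem_union.1 h3 with h4 | h4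
              · exact Or.inl (by simpa using Finsupp.support_single_subset h4)
              · exact Or.inr (by simpa using Finsupp.support_single_subset h4)
            rcases hq2 with rfl | rfl <;> subst hqp <;> constructor <;>
              simp [deg, List.count_cons] <;> omega
      · have hmem := Finsupp.mapDomain_support (Finsupp.mem_support_iff.2 h2)
        rw [Finset.mem_image] at hmem
        obtain ⟨q, hq, hqp⟩ := hmem
        have hih := ih (Finsupp.mem_support_iff.1 hq)
        subst hqp
        constructor
        · have := hih.1
          simp only [deg, List.length_cons, List.count_cons] at *
          cases a <;> simp at * <;> omega
        · have := hih.2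
          simp only [List.length_cons] at *
          omega

lemma mem_allLists : ∀ (n : ℕ) (w : Mon), w.length ≤ n → w ∈ allLists n := by
  intro n
  induction n with
  | zero =>
      intro w hw
      have : w = [] := List.eq_nil_of_length_eq_zero (Nat.le_zero.1 hw)
      simp [this, allLists]
  | succ n ih =>
      intro w hw
      rw [allLists]
      cases w with
      | nil => simp
      | cons a t =>
          simp only [List.mem_cons, List.mem_flatMap]
          right
          refine ⟨t, ih t (by simpa using hw), ?_⟩
          cases a <;> simp

lemma nodup_allLists (n : ℕ) : (allLists n).Nodup := by
  induction n with
  | zero => simp [allLists]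
  | succ n ih =>
      rw [allLists, List.nodup_cons]
      constructor
      · simp only [List.mem_flatMap]
        rintro ⟨w, -, hw⟩
        simp at hw
      · rw [List.nodup_flatMap]
        constructor
        · intro w _
          simp
        · apply List.Pairwise.imp _ ih
          intro w w' hne
          intro x hx hx'
          simp only [List.mem_cons, List.not_mem_nil, or_false] at hx hx'
          rcases hx with rfl | rfl <;> rcases hx' with h | h <;>
            simp_all

/-- For cd-monomials `u, v` of degrees `m, n`,
`β(u • v) = C(m+n+2, m+1) · β(u) · β(v)`. -/
theorem beta_bullet (u v : Mon) :
    betaF (bulletDualMon u v)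
      = (Nat.choose (deg u + deg v + 2) (deg u + 1) : ℚ) * beta u * beta v := by
  classical
  set N := deg u + deg v + 1 with hN
  set L := u.length + v.length + 1 with hL
  have step1 : betaF (bulletDualMon u v)
      = ((allLists L).map fun w => dP w (u, v) * (Psi N).coeff (FreeMonoid.ofList w)).sum := by
    rw [bulletDualMon, map_list_sum, List.map_map]
    congr 1
    apply List.map_congr_left
    intro w hw
    show betaF (dP w (u, v) • mono w) = _
    rw [map_smul, betaF_mono, smul_eq_mul]
    by_cases h : dP w (u, v) = 0
    · rw [h, zero_mul, zero_mul]
    · have hdeg : deg w = N := by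
        have h' : deg u + deg v + 1 = deg w := (dP_apply_ne h).1
        omega
      rw [beta, hdeg]
  have step2 : ((allLists L).map fun w => dP w (u, v) * (Psi N).coeff (FreeMonoid.ofList w)).sum
      = (Psi N).coeff.sum fun w r => r * dP (FreeMonoid.toList w) (u, v) := by
    have h1 : ((allLists L).map fun w => dP w (u, v) * (Psi N).coeff (FreeMonoid.ofList w)).sum
        = ∑ w ∈ (allLists L).toFinset, dP w (u, v) * (Psi N).coeff (FreeMonoid.ofList w) := by
      rw [List.sum_toFinset _ (nodup_allLists L)]
    have h2 : (Psi N).coeff.sum (fun w r => r * dP (FreeMonoid.toList w) (u, v))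
        = ∑ w ∈ ((Psi N).coeff.support : Finset Mon),
            (Psi N).coeff (FreeMonoid.ofList w) * dP w (u, v) := rfl
    rw [h1, h2]
    have hA : ∑ w ∈ (allLists L).toFinset, dP w (u, v) * (Psi N).coeff (FreeMonoid.ofList w)
        = ∑ w ∈ (allLists L).toFinset ∪ ((Psi N).coeff.support : Finset Mon),
            dP w (u, v) * (Psi N).coeff (FreeMonoid.ofList w) := by
      apply Finset.sum_subset Finset.subset_union_left
      intro w hwU hwA
      by_cases h : dP w (u, v) = 0
      · rw [h, zero_mul]
      · exfalso
        apply hwA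
        rw [List.mem_toFinset]
        refine mem_allLists L w ?_
        have h' : w.length ≤ u.length + v.length + 1 := (dP_apply_ne h).2
        omega
    have hB : ∑ w ∈ ((Psi N).coeff.support : Finset Mon), (Psi N).coeff (FreeMonoid.ofList w) * dP w (u, v)
        = ∑ w ∈ (allLists L).toFinset ∪ ((Psi N).coeff.support : Finset Mon),
            (Psi N).coeff (FreeMonoid.ofList w) * dP w (u, v) := by
      apply Finset.sum_subset Finset.subset_union_right
      intro w hwU hwB
      have hz : (Psi N).coeff (FreeMonoid.ofList w) = 0 := Finsupp.notMem_support_iff.1 hwB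
      rw [hz, zero_mul]
    rw [hA, hB]
    exact Finset.sum_congr rfl fun w _ => mul_comm _ _
  have step3 : ((Psi N).coeff.sum fun w r => r * dP (FreeMonoid.toList w) (u, v))
      = E u v (Delta (Psi N)) := by
    rw [Delta, LinearMap.comp_apply]
    erw [Finsupp.lsum_apply]
    rw [map_finsuppSum]
    apply Finsupp.sum_congr
    intro w hw
    rw [LinearMap.toSpanSingleton_apply, map_smul, E_S, smul_eq_mul]
  have hm : deg u < N := by omega
  have step4 : E u v (Delta (Psi N)) = ((N + 1).choose (deg u + 1) : ℚ) * beta u * beta v := by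
    rw [Delta_Psi, map_sum]
    rw [Finset.sum_eq_single (deg u)]
    · rw [map_smul, E_tmul, smul_eq_mul]
      have h1 : N - 1 - deg u = deg v := by omega
      rw [h1, mul_assoc]
      rfl
    · intro j hj hne
      have hz : (Psi j).coeff (FreeMonoid.ofList u) = 0 := by
        by_contra hc
        exact hne ((homog_Psi j _ (Finsupp.mem_support_iff.2 hc)).symm)
      rw [map_smul, E_tmul, hz, smul_eq_mul, zero_mul, mul_zero]
    · intro h
      exact absurd (Finset.mem_range.2 hm) h
  rw [step1, step2, step3, step4]
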